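/- arXiv:2505.02169 — 3 statements merged into one kernel-verified Lean document; each statement's English description precedes it below -/
import Mathlib

section
/- Let ρ ∈ ℂ with Im ρ > 0, set z := z(ρ) = (1/2 + iρ)/(1/2 − iρ), let (cₙ)_{n≥0} be a square-summable sequence of complex numbers, and let N ∈ ℕ. Then the series Σ_{n=N+1}^{∞} (−1)ⁿ·zⁿ·cₙ converges absolutely and |(z + 1)·Σ_{n=N+1}^{∞} (−1)ⁿ·zⁿ·cₙ| ≤ (Σ_{n=N+1}^{∞} |cₙ|²)^{1/2} / √(2·Im ρ). -/
/-- The Möbius transformation `z(ρ) = (1/2 + iρ)/(1/2 − iρ)`. -/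
noncomputable def zmap (ρ : ℂ) : ℂ :=
  (1 / 2 + Complex.I * ρ) / (1 / 2 - Complex.I * ρ)

/-- Tail estimate: for `Im ρ > 0` and a square-summable sequence `c`, the tail series
`Σ_{n=N+1}^{∞} (−1)ⁿ zⁿ cₙ` converges absolutely and
`|(z+1) Σ_{n=N+1}^{∞} (−1)ⁿ zⁿ cₙ| ≤ (Σ_{n=N+1}^{∞} |cₙ|²)^{1/2} / √(2 Im ρ)`. -/
theorem tail_estimate (ρ : ℂ) (hρ : 0 < ρ.im) (c : ℕ → ℂ)
    (hc : Summable fun n => ‖c n‖ ^ 2) (N : ℕ) :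
    Summable (fun n : ℕ =>
      ‖(-1 : ℂ) ^ (n + N + 1) * (zmap ρ) ^ (n + N + 1) * c (n + N + 1)‖) ∧
    ‖(zmap ρ + 1) *
        ∑' n : ℕ, (-1 : ℂ) ^ (n + N + 1) * (zmap ρ) ^ (n + N + 1) * c (n + N + 1)‖
      ≤ Real.sqrt (∑' n : ℕ, ‖c (n + N + 1)‖ ^ 2) / Real.sqrt (2 * ρ.im) := by
  have hw : (1/2 - Complex.I * ρ : ℂ) ≠ 0 := by
    intro h
    have := congrArg Complex.re h
    simp [Complex.sub_re, Complex.mul_re, Complex.I_re, Complex.I_im] at this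
    linarith
  have hz1 : zmap ρ + 1 = 1 / (1/2 - Complex.I * ρ) := by
    rw [zmap, div_add' _ _ _ hw]
    congr 1
    ring
  have hnw : 0 < Complex.normSq (1/2 - Complex.I*ρ) := Complex.normSq_pos.mpr hw
  have h1 : ‖zmap ρ‖^2 = Complex.normSq (1/2+Complex.I*ρ) / Complex.normSq (1/2-Complex.I*ρ) := by
    rw [zmap, Complex.sq_norm, Complex.normSq_div]
  have h2 : ‖zmap ρ + 1‖^2 = 1 / Complex.normSq (1/2-Complex.I*ρ) := by
    rw [hz1, Complex.sq_norm, Complex.normSq_div, Complex.normSq_one]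
  have h3 : Complex.normSq (1/2-Complex.I*ρ) - Complex.normSq (1/2+Complex.I*ρ) = 2*ρ.im := by
    simp [Complex.normSq_apply, Complex.add_re, Complex.add_im, Complex.sub_re, Complex.sub_im,
      Complex.mul_re, Complex.mul_im, Complex.I_re, Complex.I_im]
    ring
  set r := ‖zmap ρ‖ with hrdef
  set t := ‖zmap ρ + 1‖ with htdef
  have key : 1 - r^2 = 2 * ρ.im * t^2 := by
    set W := Complex.normSq (1/2 - Complex.I*ρ) with hW
    set A := Complex.normSq (1/2 + Complex.I*ρ) with hA
    rw [hrdef, htdef, h1, h2]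
    field_simp
    linarith
  have ht0 : 0 < t := by
    rw [htdef, hz1]
    exact norm_pos_iff.mpr (one_div_ne_zero hw)
  have hr0 : 0 ≤ r := norm_nonneg _
  have htt : 0 < 2 * ρ.im * t^2 := by positivity
  have hr1 : r < 1 := by nlinarith
  have hr2 : r^2 < 1 := by nlinarith
  -- square-summable tails
  have hg_sum : Summable fun n => ‖c (n + N + 1)‖ ^ 2 := by
    have := hc.comp_injective (add_left_injective (N + 1))
    simpa [add_assoc, Function.comp_def] using this
  have hf_sum : Summable fun n : ℕ => (r ^ (n + N + 1)) ^ 2 := by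
    have hgeo : Summable fun n : ℕ => (r^2) ^ n :=
      summable_geometric_of_lt_one (by positivity) hr2
    have := hgeo.mul_left ((r^2) ^ (N + 1))
    apply this.congr
    intro n
    rw [← pow_add, ← pow_mul, ← pow_mul]
    congr 1
    ring
  -- Cauchy–Schwarz
  have hconj : (2:ℝ).HolderConjugate 2 := Real.HolderConjugate.two_two
  have hcs := Real.summable_and_inner_le_Lp_mul_Lq_tsum_of_nonneg hconj
    (f := fun n : ℕ => r ^ (n + N + 1)) (g := fun n : ℕ => ‖c (n + N + 1)‖)
    (fun n => by positivity) (fun n => norm_nonneg _)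
    (by
      apply hf_sum.congr
      intro n
      rw [show (2:ℝ) = ((2:ℕ):ℝ) from by norm_num, Real.rpow_natCast])
    (by
      apply hg_sum.congr
      intro n
      rw [show (2:ℝ) = ((2:ℕ):ℝ) from by norm_num, Real.rpow_natCast])
  obtain ⟨hsum, hineq⟩ := hcs
  have hnorm_eq : ∀ n : ℕ,
      ‖(-1 : ℂ) ^ (n + N + 1) * (zmap ρ) ^ (n + N + 1) * c (n + N + 1)‖
        = r ^ (n + N + 1) * ‖c (n + N + 1)‖ := by
    intro n
    rw [norm_mul, norm_mul, norm_pow, norm_pow, norm_neg, norm_one, one_pow, one_mul]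
  have hSummable : Summable (fun n : ℕ =>
      ‖(-1 : ℂ) ^ (n + N + 1) * (zmap ρ) ^ (n + N + 1) * c (n + N + 1)‖) := by
    apply hsum.congr
    intro n
    exact (hnorm_eq n).symm
  refine ⟨hSummable, ?_⟩
  -- rpow→sqrt conversions
  have hrpow2 : ∀ x : ℝ, x ^ (2:ℝ) = x ^ (2:ℕ) := fun x => by
    rw [show (2:ℝ) = ((2:ℕ):ℝ) from by norm_num, Real.rpow_natCast]
  have hineq' : (∑' n, r ^ (n + N + 1) * ‖c (n + N + 1)‖)
      ≤ Real.sqrt (∑' n, (r ^ (n + N + 1))^2) * Real.sqrt (∑' n, ‖c (n + N + 1)‖^2) := by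
    calc (∑' n, r ^ (n + N + 1) * ‖c (n + N + 1)‖)
        ≤ (∑' n, (r ^ (n + N + 1)) ^ (2:ℝ)) ^ (1/(2:ℝ)) * (∑' n, ‖c (n + N + 1)‖ ^ (2:ℝ)) ^ (1/(2:ℝ)) := hineq
      _ = _ := by
          simp_rw [hrpow2, ← Real.sqrt_eq_rpow]
  -- bound the geometric sum
  have hfs_le : (∑' n, (r ^ (n + N + 1))^2) ≤ (1 - r^2)⁻¹ := by
    have hgeo : Summable fun n : ℕ => (r^2) ^ n :=
      summable_geometric_of_lt_one (by positivity) hr2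
    have heq : (∑' n, (r ^ (n + N + 1))^2) = (r^2)^(N+1) * ∑' n : ℕ, (r^2) ^ n := by
      rw [← tsum_mul_left]
      congr 1
      funext n
      rw [← pow_add, ← pow_mul, ← pow_mul]
      congr 1
      ring
    rw [heq, tsum_geometric_of_lt_one (by positivity) hr2]
    have h4 : (r^2)^(N+1) ≤ 1 := pow_le_one₀ (by positivity) hr2.le
    have h5 : (0:ℝ) < 1 - r^2 := by nlinarith
    exact mul_le_of_le_one_left (inv_nonneg.mpr h5.le) h4
  have hnorm_tsum : ‖∑' n : ℕ, (-1 : ℂ) ^ (n + N + 1) * (zmap ρ) ^ (n + N + 1) * c (n + N + 1)‖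
      ≤ ∑' n, r ^ (n + N + 1) * ‖c (n + N + 1)‖ := by
    calc ‖∑' n : ℕ, (-1 : ℂ) ^ (n + N + 1) * (zmap ρ) ^ (n + N + 1) * c (n + N + 1)‖
        ≤ ∑' n, ‖(-1 : ℂ) ^ (n + N + 1) * (zmap ρ) ^ (n + N + 1) * c (n + N + 1)‖ :=
          norm_tsum_le_tsum_norm hSummable
      _ = _ := by exact tsum_congr hnorm_eq
  -- put it together
  have hG : 0 ≤ Real.sqrt (∑' n, ‖c (n + N + 1)‖^2) := Real.sqrt_nonneg _
  have hkey2 : t * Real.sqrt ((1 - r^2)⁻¹) = (Real.sqrt (2 * ρ.im))⁻¹ := by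
    rw [key, Real.sqrt_inv, Real.sqrt_mul (by positivity), Real.sqrt_sq ht0.le]
    field_simp
  rw [norm_mul]
  calc t * ‖∑' n : ℕ, (-1 : ℂ) ^ (n + N + 1) * (zmap ρ) ^ (n + N + 1) * c (n + N + 1)‖
      ≤ t * (Real.sqrt (∑' n, (r ^ (n + N + 1))^2) * Real.sqrt (∑' n, ‖c (n + N + 1)‖^2)) :=
        mul_le_mul_of_nonneg_left (le_trans hnorm_tsum hineq') ht0.le
    _ ≤ t * (Real.sqrt ((1 - r^2)⁻¹) * Real.sqrt (∑' n, ‖c (n + N + 1)‖^2)) := by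
        apply mul_le_mul_of_nonneg_left _ ht0.le
        exact mul_le_mul_of_nonneg_right (Real.sqrt_le_sqrt hfs_le) hG
    _ = Real.sqrt (∑' n, ‖c (n + N + 1)‖^2) / Real.sqrt (2 * ρ.im) := by
        rw [← mul_assoc, hkey2, div_eq_inv_mul, mul_comm]
end

section
/- Define z(ρ) := (1/2 + iρ)/(1/2 − iρ) for ρ ∈ ℝ. For every K ∈ ℕ and all complex numbers c₀, c₁, …, c_K, the identity ∫_{−∞}^{∞} |(z(ρ) + 1)·Σ_{n=0}^{K} (−1)ⁿ·z(ρ)ⁿ·cₙ|² dρ = 2π·Σ_{n=0}^{K} |cₙ|² holds. -/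
open MeasureTheory Complex Filter Real Topology

namespace ParsevalAux

lemma hw (ρ : ℝ) : (1/2 : ℂ) - Complex.I * ρ ≠ 0 := by
  intro h; have := congrArg Complex.re h; simp at this

lemma hv (ρ : ℝ) : (1/2 : ℂ) + Complex.I * ρ ≠ 0 := by
  intro h; have := congrArg Complex.re h; simp at this

lemma norm_z (ρ : ℝ) : ‖zmap ρ‖ = 1 := by
  rw [zmap, norm_div,
    show (1/2 : ℂ) + Complex.I * ρ = (starRingEnd ℂ) ((1/2:ℂ) - Complex.I * ρ) by
      simp only [map_sub, map_div₀, map_one, map_ofNat, map_mul, Complex.conj_I,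
        Complex.conj_ofReal]; ring,
    RCLike.norm_conj, div_self (norm_ne_zero_iff.2 (hw ρ))]

lemma hqpos (ρ : ℝ) : (0:ℝ) < 1/4 + ρ^2 := by positivity

lemma hq (ρ : ℝ) : ((1/2:ℂ) + Complex.I * ρ) * ((1/2:ℂ) - Complex.I * ρ)
    = (((1:ℝ)/4 + ρ^2 : ℝ) : ℂ) := by
  push_cast
  ring_nf
  rw [Complex.I_sq]
  ring

lemma conj_zmap (ρ : ℝ) :
    (starRingEnd ℂ) (zmap ρ) = ((1/2:ℂ) - Complex.I * ρ) / ((1/2:ℂ) + Complex.I * ρ) := by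
  simp only [zmap, map_div₀, map_add, map_sub, map_mul, map_one, map_ofNat, map_div₀,
    Complex.conj_I, Complex.conj_ofReal, map_one]
  ring_nf

lemma zmul (ρ : ℝ) : zmap ρ * (starRingEnd ℂ) (zmap ρ) = 1 := by
  rw [conj_zmap, zmap, div_mul_div_comm,
    div_eq_one_iff_eq (mul_ne_zero (hw ρ) (hv ρ))]
  ring

lemma zadd (ρ : ℝ) : zmap ρ + 1 = ((1/2:ℂ) - Complex.I * ρ)⁻¹ := by
  rw [zmap, div_add' _ _ _ (hw ρ), eq_comm, inv_eq_one_div]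
  congr 1
  ring


lemma hasDeriv_z (ρ : ℝ) :
    HasDerivAt zmap (Complex.I / ((1/2:ℂ) - Complex.I * ρ)^2) (ρ:ℂ) := by
  have hu : HasDerivAt (fun z : ℂ => 1/2 + Complex.I * z) Complex.I (ρ:ℂ) := by
    simpa using ((hasDerivAt_id (ρ:ℂ)).const_mul Complex.I).const_add (1/2 : ℂ)
  have hvd : HasDerivAt (fun z : ℂ => 1/2 - Complex.I * z) (-Complex.I) (ρ:ℂ) := by
    simpa using ((hasDerivAt_id (ρ:ℂ)).const_mul Complex.I).const_sub (1/2 : ℂ)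
  have h := hu.div hvd (hw ρ)
  have : zmap = fun z : ℂ => (1/2 + Complex.I * z) / (1/2 - Complex.I * z) := by
    funext z; rw [zmap]
  rw [this]
  refine h.congr_deriv ?_
  ring

lemma key (k : ℕ) (hk : 1 ≤ k) (ρ : ℝ) :
    HasDerivAt (fun t : ℝ => zmap t ^ k / ((k : ℂ) * Complex.I))
      (zmap ρ ^ k * (((1:ℝ)/4 + ρ^2 : ℝ) : ℂ)⁻¹) ρ := by
  obtain ⟨j, rfl⟩ : ∃ j, k = j + 1 := ⟨k - 1, (Nat.succ_pred_eq_of_pos hk).symm⟩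
  have h := (((hasDeriv_z ρ).pow (j+1)).comp_ofReal).div_const ((j+1 : ℕ) * Complex.I)
  refine h.congr_deriv (Eq.symm ?_)
  simp only [Nat.add_sub_cancel]
  have hj : ((j+1 : ℕ) : ℂ) ≠ 0 := Nat.cast_ne_zero.mpr (Nat.succ_ne_zero j)
  have hq : (((1:ℝ)/4 + ρ^2 : ℝ) : ℂ)
      = ((1/2:ℂ) + Complex.I * ρ) * ((1/2:ℂ) - Complex.I * ρ) := by
    push_cast; ring_nf; rw [Complex.I_sq]; ring
  have hzuv : zmap ρ * (((1/2:ℂ) + Complex.I * ρ) * ((1/2:ℂ) - Complex.I * ρ))⁻¹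
      = (((1/2:ℂ) - Complex.I * ρ) ^ 2)⁻¹ := by
    rw [show zmap (ρ:ℂ) = ((1/2:ℂ) + Complex.I * ρ) / ((1/2:ℂ) - Complex.I * ρ) from rfl,
      div_eq_mul_inv, mul_inv, sq, mul_inv,
      show ((1/2:ℂ) + Complex.I * ρ) * ((1/2:ℂ) - Complex.I * ρ)⁻¹ *
          ((((1/2:ℂ) + Complex.I * ρ))⁻¹ * (((1/2:ℂ) - Complex.I * ρ))⁻¹)
        = ((1/2:ℂ) + Complex.I * ρ) * (((1/2:ℂ) + Complex.I * ρ))⁻¹ *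
          ((((1/2:ℂ) - Complex.I * ρ))⁻¹ * (((1/2:ℂ) - Complex.I * ρ))⁻¹) from by ring,
      mul_inv_cancel₀ (hv ρ), one_mul]
  rw [hq, pow_succ, mul_assoc, hzuv, eq_div_iff (mul_ne_zero hj Complex.I_ne_zero)]
  ring

lemma cont_z : Continuous fun ρ : ℝ => zmap ρ := by
  have : (fun ρ : ℝ => zmap ρ)
      = fun ρ : ℝ => ((1/2:ℂ) + Complex.I * ρ) / ((1/2:ℂ) - Complex.I * ρ) := rfl
  rw [this]
  exact Continuous.div (by continuity) (by continuity) (fun ρ => hw ρ)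

lemma intq : Integrable fun ρ : ℝ => ((1:ℝ)/4 + ρ^2)⁻¹ := by
  have h := (integrable_inv_one_add_sq.comp_mul_left' (two_ne_zero)).const_mul 4
  refine h.congr (Filter.Eventually.of_forall fun x => ?_)
  have hx : (0:ℝ) < 1/4 + x^2 := by positivity
  have hx2 : (0:ℝ) < 1 + (2*x)^2 := by positivity
  field_simp
  ring

lemma I0 : ∫ ρ : ℝ, ((1:ℝ)/4 + ρ^2)⁻¹ = 2 * π := by
  have h1 : ∀ ρ : ℝ, ((1:ℝ)/4 + ρ^2)⁻¹ = 4 * (1 + (2*ρ)^2)⁻¹ := by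
    intro ρ
    have hx : (0:ℝ) < 1/4 + ρ^2 := by positivity
    have hx2 : (0:ℝ) < 1 + (2*ρ)^2 := by positivity
    field_simp
    ring
  simp_rw [h1]
  rw [MeasureTheory.integral_const_mul,
    MeasureTheory.Measure.integral_comp_mul_left (fun x : ℝ => (1 + x^2)⁻¹) 2,
    integral_univ_inv_one_add_sq]
  rw [smul_eq_mul]
  rw [abs_of_pos (by norm_num : (0:ℝ) < (2:ℝ)⁻¹)]
  ring

lemma intTerm (n m : ℕ) :
    Integrable fun ρ : ℝ =>
      (zmap ρ)^n * ((starRingEnd ℂ) (zmap ρ))^m * (((1:ℝ)/4 + ρ^2 : ℝ) : ℂ)⁻¹ := by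
  have hqc : Continuous fun ρ : ℝ => (((1:ℝ)/4 + ρ^2 : ℝ) : ℂ)⁻¹ := by
    apply Continuous.inv₀
    · exact Complex.continuous_ofReal.comp (by continuity)
    · intro ρ
      simp only [ne_eq, Complex.ofReal_eq_zero]
      positivity
  refine Integrable.mono' intq
    (((((cont_z.pow n)).mul ((Complex.continuous_conj.comp cont_z).pow m)).mul
      hqc).aestronglyMeasurable)
    (Filter.Eventually.of_forall fun ρ => ?_)
  have hq : (0:ℝ) < 1/4 + ρ^2 := by positivity
  rw [norm_mul, norm_mul, norm_pow, norm_pow, norm_z, RCLike.norm_conj, norm_z,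
    one_pow, one_pow, one_mul, one_mul, norm_inv, Complex.norm_real, Real.norm_eq_abs,
    abs_of_pos hq]

lemma tend_vinv {l : Filter ℝ} (hl : Tendsto (fun ρ : ℝ => |ρ|) l atTop) :
    Tendsto (fun ρ : ℝ => ((1/2:ℂ) - Complex.I * ρ)⁻¹) l (𝓝 0) := by
  apply squeeze_zero_norm' (a := fun ρ : ℝ => |ρ|⁻¹)
  · filter_upwards [hl.eventually (Filter.eventually_ge_atTop 1)] with ρ hρ
    rw [norm_inv]
    apply inv_anti₀ (by linarith)
    calc |ρ| = |((1/2:ℂ) - Complex.I * ρ).im| := by simp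
      _ ≤ ‖(1/2:ℂ) - Complex.I * ρ‖ := Complex.abs_im_le_norm _
  · exact hl.inv_tendsto_atTop

lemma tend_z {l : Filter ℝ} (hl : Tendsto (fun ρ : ℝ => |ρ|) l atTop) (k : ℕ) :
    Tendsto (fun ρ : ℝ => zmap ρ ^ k / ((k:ℂ) * Complex.I)) l
      (𝓝 (((-1:ℂ)) ^ k / ((k:ℂ) * Complex.I))) := by
  have h1 : Tendsto (fun ρ : ℝ => zmap ρ) l (𝓝 (-1)) := by
    have := (tend_vinv hl).sub_const 1
    rw [zero_sub] at this
    refine this.congr fun ρ => ?_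
    rw [← zadd ρ]; ring
  exact (h1.pow k).div_const _

lemma Ik (k : ℕ) (hk : 1 ≤ k) :
    ∫ ρ : ℝ, (zmap ρ)^k * (((1:ℝ)/4 + ρ^2 : ℝ) : ℂ)⁻¹ = 0 := by
  have hint : Integrable fun ρ : ℝ => (zmap ρ)^k * (((1:ℝ)/4 + ρ^2 : ℝ) : ℂ)⁻¹ := by
    simpa using intTerm k 0
  rw [← intervalIntegral.integral_Iic_add_Ioi (b := 0) hint.integrableOn hint.integrableOn,
    MeasureTheory.integral_Ioi_of_hasDerivAt_of_tendsto' (fun x _ => key k hk x)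
      hint.integrableOn (tend_z tendsto_abs_atTop_atTop k),
    MeasureTheory.integral_Iic_of_hasDerivAt_of_tendsto' (fun x _ => key k hk x)
      hint.integrableOn (tend_z tendsto_abs_atBot_atTop k)]
  ring

lemma ofReal_integral_helper (f : ℝ → ℝ) :
    ∫ x : ℝ, ((f x : ℝ) : ℂ) = ((∫ x : ℝ, f x : ℝ) : ℂ) :=
  integral_ofReal

lemma re_integral_helper (f : ℝ → ℂ) (hf : Integrable f) :
    ∫ x : ℝ, (f x).re = (∫ x : ℝ, f x).re :=
  integral_re hf

lemma zq (ρ : ℝ) :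
    (zmap ρ + 1) * (starRingEnd ℂ) (zmap ρ + 1) = (((1:ℝ)/4 + ρ^2 : ℝ) : ℂ)⁻¹ := by
  rw [zadd, map_inv₀,
    show (starRingEnd ℂ) ((1/2:ℂ) - Complex.I * ρ) = (1/2:ℂ) + Complex.I * ρ by
      simp only [map_sub, map_div₀, map_one, map_ofNat, map_mul, Complex.conj_I,
        Complex.conj_ofReal]; ring,
    ← mul_inv, show ((1/2:ℂ) - Complex.I * ρ) * ((1/2:ℂ) + Complex.I * ρ)
      = ((1/2:ℂ) + Complex.I * ρ) * ((1/2:ℂ) - Complex.I * ρ) from mul_comm _ _, hq]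

lemma Jgt (n m : ℕ) (h : m < n) :
    ∫ ρ : ℝ, (zmap ρ)^n * ((starRingEnd ℂ) (zmap ρ))^m * (((1:ℝ)/4 + ρ^2 : ℝ) : ℂ)⁻¹ = 0 := by
  have hpt : ∀ ρ : ℝ, (zmap ρ)^n * ((starRingEnd ℂ) (zmap ρ))^m * (((1:ℝ)/4 + ρ^2 : ℝ) : ℂ)⁻¹
      = (zmap ρ)^(n-m) * (((1:ℝ)/4 + ρ^2 : ℝ) : ℂ)⁻¹ := by
    intro ρ
    have hsplit : (zmap ρ)^n = (zmap ρ)^(n-m) * (zmap ρ)^m := by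
      rw [← pow_add]; congr 1; omega
    calc (zmap ρ)^n * ((starRingEnd ℂ) (zmap ρ))^m * (((1:ℝ)/4 + ρ^2 : ℝ) : ℂ)⁻¹
        = (zmap ρ)^(n-m) * (zmap ρ * (starRingEnd ℂ) (zmap ρ))^m
            * (((1:ℝ)/4 + ρ^2 : ℝ) : ℂ)⁻¹ := by rw [hsplit, mul_pow]; ring
      _ = (zmap ρ)^(n-m) * (((1:ℝ)/4 + ρ^2 : ℝ) : ℂ)⁻¹ := by rw [zmul, one_pow, mul_one]
  simp_rw [hpt]
  exact Ik (n-m) (by omega)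

lemma J (n m : ℕ) :
    ∫ ρ : ℝ, (zmap ρ)^n * ((starRingEnd ℂ) (zmap ρ))^m * (((1:ℝ)/4 + ρ^2 : ℝ) : ℂ)⁻¹
      = if n = m then ((2 * π : ℝ) : ℂ) else 0 := by
  rcases lt_trichotomy n m with hlt | heq | hgt
  · rw [if_neg (Nat.ne_of_lt hlt)]
    have hpt : ∀ ρ : ℝ, (zmap ρ)^n * ((starRingEnd ℂ) (zmap ρ))^m * (((1:ℝ)/4 + ρ^2 : ℝ) : ℂ)⁻¹
        = (starRingEnd ℂ) ((zmap ρ)^m * ((starRingEnd ℂ) (zmap ρ))^n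
            * (((1:ℝ)/4 + ρ^2 : ℝ) : ℂ)⁻¹) := by
      intro ρ
      simp only [map_mul, map_pow, map_inv₀, Complex.conj_conj, Complex.conj_ofReal]
      ring
    simp_rw [hpt]
    rw [integral_conj, Jgt m n hlt, map_zero]
  · subst heq
    rw [if_pos rfl]
    have hpt : ∀ ρ : ℝ, (zmap ρ)^n * ((starRingEnd ℂ) (zmap ρ))^n * (((1:ℝ)/4 + ρ^2 : ℝ) : ℂ)⁻¹
        = ((((1:ℝ)/4 + ρ^2)⁻¹ : ℝ) : ℂ) := by
      intro ρ
      rw [← mul_pow, zmul, one_pow, one_mul, Complex.ofReal_inv]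
    simp_rw [hpt]
    rw [ofReal_integral_helper (fun ρ : ℝ => ((1:ℝ)/4 + ρ^2)⁻¹), I0]
  · rw [if_neg (Nat.ne_of_gt hgt)]
    exact Jgt n m hgt

end ParsevalAux

/-- Parseval-type identity: for all complex `c₀, …, c_K`,
`∫_{−∞}^{∞} |(z(ρ)+1) Σ_{n=0}^{K} (−1)ⁿ z(ρ)ⁿ cₙ|² dρ = 2π Σ_{n=0}^{K} |cₙ|²`. -/
theorem parseval_identity (K : ℕ) (c : ℕ → ℂ) :
    ∫ ρ : ℝ,
        ‖(zmap (ρ : ℂ) + 1) *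
            ∑ n ∈ Finset.range (K + 1), (-1 : ℂ) ^ n * (zmap (ρ : ℂ)) ^ n * c n‖ ^ 2
      = 2 * Real.pi * ∑ n ∈ Finset.range (K + 1), ‖c n‖ ^ 2 := by
  classical
  open ParsevalAux in
  set r := Finset.range (K + 1) with hr
  set F : ℝ → ℂ := fun ρ =>
    ∑ n ∈ r, ∑ m ∈ r, ((-1:ℂ)^n * c n * (starRingEnd ℂ) ((-1:ℂ)^m * c m)) *
      ((zmap ρ)^n * ((starRingEnd ℂ) (zmap ρ))^m * (((1:ℝ)/4 + ρ^2 : ℝ) : ℂ)⁻¹) with hF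
  have hint : ∀ n m : ℕ, Integrable fun ρ : ℝ =>
      ((-1:ℂ)^n * c n * (starRingEnd ℂ) ((-1:ℂ)^m * c m)) *
      ((zmap ρ)^n * ((starRingEnd ℂ) (zmap ρ))^m * (((1:ℝ)/4 + ρ^2 : ℝ) : ℂ)⁻¹) :=
    fun n m => (intTerm n m).const_mul _
  have hFint : Integrable F :=
    integrable_finset_sum r fun n _ => integrable_finset_sum r fun m _ => hint n m
  have hpt : ∀ ρ : ℝ,
      ‖(zmap (ρ : ℂ) + 1) * ∑ n ∈ r, (-1 : ℂ) ^ n * (zmap (ρ : ℂ)) ^ n * c n‖ ^ 2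
        = (F ρ).re := by
    intro ρ
    set u := (zmap (ρ : ℂ) + 1) * ∑ n ∈ r, (-1 : ℂ) ^ n * (zmap (ρ : ℂ)) ^ n * c n with hu
    have h1 : ‖u‖^2 = (u * (starRingEnd ℂ) u).re := by
      rw [Complex.mul_conj, Complex.ofReal_re, Complex.normSq_eq_norm_sq]
    rw [h1]
    congr 1
    rw [hu, map_mul, map_sum]
    calc (zmap (ρ:ℂ) + 1) * (∑ n ∈ r, (-1:ℂ)^n * (zmap ρ)^n * c n) *
          ((starRingEnd ℂ) (zmap (ρ:ℂ) + 1) *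
            ∑ m ∈ r, (starRingEnd ℂ) ((-1:ℂ)^m * (zmap ρ)^m * c m))
        = ((zmap (ρ:ℂ) + 1) * (starRingEnd ℂ) (zmap (ρ:ℂ) + 1)) *
          ((∑ n ∈ r, (-1:ℂ)^n * (zmap ρ)^n * c n) *
            ∑ m ∈ r, (starRingEnd ℂ) ((-1:ℂ)^m * (zmap ρ)^m * c m)) := by ring
      _ = (((1:ℝ)/4 + ρ^2 : ℝ) : ℂ)⁻¹ *
          ∑ n ∈ r, ∑ m ∈ r, ((-1:ℂ)^n * (zmap ρ)^n * c n) *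
            (starRingEnd ℂ) ((-1:ℂ)^m * (zmap ρ)^m * c m) := by
          rw [zq, Finset.sum_mul_sum]
      _ = F ρ := by
          rw [hF, Finset.mul_sum]
          refine Finset.sum_congr rfl fun n _ => ?_
          rw [Finset.mul_sum]
          refine Finset.sum_congr rfl fun m _ => ?_
          simp only [map_mul, map_pow]
          ring
  rw [MeasureTheory.integral_congr_ae (Filter.Eventually.of_forall hpt),
    ParsevalAux.re_integral_helper F hFint]
  have hFval : (∫ ρ : ℝ, F ρ) = ∑ n ∈ r, ((-1:ℂ)^n * c n * (starRingEnd ℂ) ((-1:ℂ)^n * c n))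
      * ((2 * π : ℝ) : ℂ) := by
    rw [hF, MeasureTheory.integral_finset_sum r
        (fun n _ => integrable_finset_sum r fun m _ => hint n m)]
    refine Finset.sum_congr rfl fun n hn => ?_
    rw [MeasureTheory.integral_finset_sum r (fun m _ => hint n m)]
    have : ∀ m ∈ r, (∫ ρ : ℝ, ((-1:ℂ)^n * c n * (starRingEnd ℂ) ((-1:ℂ)^m * c m)) *
        ((zmap ρ)^n * ((starRingEnd ℂ) (zmap ρ))^m * (((1:ℝ)/4 + ρ^2 : ℝ) : ℂ)⁻¹))
        = if n = m then ((-1:ℂ)^n * c n * (starRingEnd ℂ) ((-1:ℂ)^m * c m))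
            * ((2 * π : ℝ) : ℂ) else 0 := by
      intro m _
      rw [MeasureTheory.integral_const_mul, J n m]
      split <;> simp
    rw [Finset.sum_congr rfl this, Finset.sum_ite_eq r n
      (fun m => ((-1:ℂ)^n * c n * (starRingEnd ℂ) ((-1:ℂ)^m * c m)) * ((2 * π : ℝ) : ℂ)),
      if_pos hn]
  rw [hFval, Complex.re_sum]
  rw [Finset.mul_sum]
  refine Finset.sum_congr rfl fun n _ => ?_
  rw [Complex.mul_conj]
  rw [show ((Complex.normSq ((-1:ℂ)^n * c n) : ℝ) : ℂ) * ((2 * π : ℝ) : ℂ)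
    = (((Complex.normSq ((-1:ℂ)^n * c n) * (2 * π) : ℝ)) : ℂ) by push_cast; ring]
  rw [Complex.ofReal_re]
  rw [Complex.normSq_eq_norm_sq, norm_mul, norm_pow, norm_neg, norm_one,
    one_pow, one_mul]
  ring
end

section
/- Let f ∈ L²(0, ∞) and let (aₙ)_{n≥0} be a sequence of complex numbers such that the partial sums Σ_{n=0}^{N} aₙ·Lₙ(s)·e^{−s/2} converge to f in the norm of L²(0, ∞) as N → ∞, where Lₙ is the Laguerre polynomial of order n. Then for every ρ ∈ ℂ with Im ρ > 0, setting z := z(ρ) = (1/2 + iρ)/(1/2 − iρ), the series Σ_{n=0}^{∞} (−1)ⁿ·zⁿ·aₙ converges absolutely and ∫₀^∞ f(s)·e^{iρ s} ds = (z + 1)·Σ_{n=0}^{∞} (−1)ⁿ·zⁿ·aₙ. -/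
open MeasureTheory

/-- The Laguerre polynomial of order `n`: `Lₙ(s) = Σ_{k=0}^{n} (n choose k) (−s)^k / k!`. -/
noncomputable def laguerre (n : ℕ) (s : ℂ) : ℂ :=
  ∑ k ∈ Finset.range (n + 1), (n.choose k : ℂ) * (-s) ^ k / (Nat.factorial k : ℂ)

open Filter Real Set
open scoped ENNReal NNReal

section Aux


lemma tendsto_aux (m : ℕ) {b : ℝ} (hb : 0 < b) :
    Tendsto (fun s : ℝ => s ^ m * Real.exp (-(b * s))) atTop (nhds 0) := by
  have h1 : Tendsto (fun x : ℝ => b * x) atTop atTop :=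
    Filter.tendsto_id.const_mul_atTop hb
  have h2 := ((tendsto_pow_mul_exp_neg_atTop_nhds_zero m).comp h1).const_mul (1 / b ^ m)
  rw [mul_zero] at h2
  refine h2.congr fun s => ?_
  simp only [Function.comp]
  field_simp [mul_pow]
  ring

lemma integrableOn_pow_exp (m : ℕ) {b : ℝ} (hb : 0 < b) :
    IntegrableOn (fun s : ℝ => s ^ m * Real.exp (-(b * s))) (Ioi 0) := by
  apply integrable_of_isBigO_exp_neg (half_pos hb) (by fun_prop)
  have h := tendsto_aux m (half_pos hb)
  have hO : (fun s : ℝ => s ^ m * Real.exp (-(b / 2 * s))) =O[atTop] (fun _ : ℝ => (1:ℝ)) :=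
    h.isBigO_one ℝ
  have : (fun s : ℝ => s ^ m * Real.exp (-(b * s))) =
      fun s : ℝ => (s ^ m * Real.exp (-(b / 2 * s))) * Real.exp (-(b / 2) * s) := by
    funext s; rw [mul_assoc, ← Real.exp_add]; ring_nf
  rw [this]
  simpa using hO.mul (Asymptotics.isBigO_refl (fun s : ℝ => Real.exp (-(b / 2) * s)) atTop)

lemma norm_aux (c : ℂ) (m : ℕ) (s : ℝ) (hs : 0 ≤ s) :
    ‖(s : ℂ) ^ m * Complex.exp (-(c * s))‖ = s ^ m * Real.exp (-(c.re * s)) := by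
  rw [norm_mul, norm_pow, Complex.norm_exp]
  simp [_root_.abs_of_nonneg hs]

lemma integrableOn_cpow_exp (m : ℕ) {c : ℂ} (hc : 0 < c.re) :
    IntegrableOn (fun s : ℝ => (s : ℂ) ^ m * Complex.exp (-(c * s))) (Ioi 0) := by
  refine (integrableOn_pow_exp m hc).mono' ((Continuous.aestronglyMeasurable (by continuity)).restrict) ?_
  filter_upwards [ae_restrict_mem measurableSet_Ioi] with s hs
  rw [norm_aux c m s (le_of_lt hs)]

lemma hasDerivAt_aux (c : ℂ) (m : ℕ) (s : ℝ) :
    HasDerivAt (fun x : ℝ => (x : ℂ) ^ m * Complex.exp (-(c * x)))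
      ((m : ℂ) * (s : ℂ) ^ (m - 1) * Complex.exp (-(c * s))
        + (s : ℂ) ^ m * (Complex.exp (-(c * s)) * (-c))) s := by
  have hre : HasDerivAt (fun x : ℝ => (x : ℂ)) 1 s := Complex.ofRealCLM.hasDerivAt
  have hpow : HasDerivAt (fun x : ℝ => (x : ℂ) ^ m) ((m : ℂ) * (s : ℂ) ^ (m - 1)) s := by
    have h := (hasDerivAt_pow m (s : ℂ)).comp s hre
    rw [mul_one] at h
    exact h
  have hexp : HasDerivAt (fun x : ℝ => Complex.exp (-(c * x))) (Complex.exp (-(c * s)) * (-c)) s := by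
    have h1 : HasDerivAt (fun x : ℝ => -(c * (x : ℂ))) (-c) s := by
      have h := (hre.const_mul c).neg
      rw [mul_one] at h
      exact h
    simpa using h1.cexp
  exact hpow.mul hexp

lemma tendsto_cpow_exp_zero (m : ℕ) {c : ℂ} (hc : 0 < c.re) (w : ℂ) :
    Tendsto (fun s : ℝ => w * ((s : ℂ) ^ m * Complex.exp (-(c * s)))) atTop (nhds 0) := by
  have h : Tendsto (fun s : ℝ => ‖w‖ * (s ^ m * Real.exp (-(c.re * s)))) atTop (nhds 0) := by
    simpa using (tendsto_aux m hc).const_mul ‖w‖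
  apply squeeze_zero_norm' ?_ h
  filter_upwards [eventually_ge_atTop (0:ℝ)] with s hs
  rw [norm_mul, norm_aux c m s hs]

lemma integral_cpow_exp {c : ℂ} (hc : 0 < c.re) (k : ℕ) :
    ∫ s in Ioi (0:ℝ), (s : ℂ) ^ k * Complex.exp (-(c * s)) = (Nat.factorial k) / c ^ (k + 1) := by
  have hc0 : c ≠ 0 := fun h => by simp [h] at hc
  induction k with
  | zero =>
      have hF : ∀ s ∈ Ici (0:ℝ), HasDerivAt (fun x : ℝ => -(1/c) * ((x:ℂ)^0 * Complex.exp (-(c*x))))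
          ((s:ℂ)^0 * Complex.exp (-(c*s))) s := by
        intro s _
        have := (hasDerivAt_aux c 0 s).const_mul (-(1/c))
        convert this using 1
        · rfl
        field_simp
        simp
      have := integral_Ioi_of_hasDerivAt_of_tendsto' hF (integrableOn_cpow_exp 0 hc)
        (tendsto_cpow_exp_zero 0 hc (-(1/c)))
      rw [this]
      simp
  | succ k ih =>
      set A := fun s : ℝ => (s:ℂ)^(k+1) * Complex.exp (-(c*s)) with hA
      set B := fun s : ℝ => ((k+1 : ℂ)/c) * ((s:ℂ)^k * Complex.exp (-(c*s))) with hB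
      have hF : ∀ s ∈ Ici (0:ℝ), HasDerivAt (fun x : ℝ => -(1/c) * ((x:ℂ)^(k+1) * Complex.exp (-(c*x))))
          (A s - B s) s := by
        intro s _
        have := (hasDerivAt_aux c (k+1) s).const_mul (-(1/c))
        convert this using 1
        · rfl
        simp only [hA, hB, Nat.add_sub_cancel]
        push_cast
        field_simp
        ring
      have hint : IntegrableOn (fun s => A s - B s) (Ioi (0:ℝ)) :=
        (integrableOn_cpow_exp (k+1) hc).sub ((integrableOn_cpow_exp k hc).const_mul _)
      have h0 := integral_Ioi_of_hasDerivAt_of_tendsto' hF hint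
        (tendsto_cpow_exp_zero (k+1) hc (-(1/c)))
      have hAB : ∫ s in Ioi (0:ℝ), (A s - B s) = 0 := by
        rw [h0]; simp
      rw [integral_sub (integrableOn_cpow_exp (k+1) hc)
        ((integrableOn_cpow_exp k hc).const_mul _), sub_eq_zero] at hAB
      calc ∫ s in Ioi (0:ℝ), A s = ∫ s in Ioi (0:ℝ), B s := hAB
        _ = ((k+1 : ℂ)/c) * ∫ s in Ioi (0:ℝ), (s:ℂ)^k * Complex.exp (-(c*s)) := by
            rw [hB, integral_const_mul]
        _ = (Nat.factorial (k+1)) / c ^ (k + 2) := by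
            rw [ih]
            rw [Nat.factorial_succ]
            push_cast
            rw [div_mul_div_comm, ← pow_succ']

lemma re_c {ρ : ℂ} (hρ : 0 < ρ.im) : 0 < (1 / 2 - Complex.I * ρ).re := by
  simp [Complex.sub_re, Complex.mul_re]
  linarith

lemma c_ne {ρ : ℂ} (hρ : 0 < ρ.im) : (1 / 2 - Complex.I * ρ) ≠ 0 :=
  fun h => absurd (re_c hρ) (by rw [h]; simp)

lemma h2_ne {ρ : ℂ} (hρ : 0 < ρ.im) : (1 : ℂ) - Complex.I * ρ * 2 ≠ 0 := by
  intro h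
  apply c_ne hρ
  linear_combination h / 2

lemma h3_ne {ρ : ℂ} (hρ : 0 < ρ.im) : (1 : ℂ) - 2 * (Complex.I * ρ) ≠ 0 := by
  intro h
  apply h2_ne hρ
  linear_combination h

lemma zmap_add_one {ρ : ℂ} (hρ : 0 < ρ.im) :
    zmap ρ + 1 = 1 / (1 / 2 - Complex.I * ρ) := by
  rw [zmap]
  rw [div_add_one (c_ne hρ)]
  congr 1
  ring

lemma one_sub_inv {ρ : ℂ} (hρ : 0 < ρ.im) :
    1 - 1 / (1 / 2 - Complex.I * ρ) = -zmap ρ := by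
  rw [zmap]
  rw [one_sub_div (c_ne hρ), ← neg_div]
  congr 1
  ring

lemma zmap_add_one_ne {ρ : ℂ} (hρ : 0 < ρ.im) : zmap ρ + 1 ≠ 0 := by
  rw [zmap_add_one hρ]
  exact one_div_ne_zero (c_ne hρ)

lemma abs_zmap_lt_one {ρ : ℂ} (hρ : 0 < ρ.im) : ‖zmap ρ‖ < 1 := by
  rw [zmap, norm_div]
  have hd : 0 < ‖(1/2 - Complex.I*ρ : ℂ)‖ := norm_pos_iff.mpr (c_ne hρ)
  rw [div_lt_one hd]
  have h2 : ‖(1/2 + Complex.I*ρ : ℂ)‖^2 < ‖(1/2 - Complex.I*ρ : ℂ)‖^2 := by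
    rw [Complex.sq_norm, Complex.sq_norm]
    simp [Complex.normSq_apply, Complex.add_re, Complex.add_im, Complex.mul_re, Complex.mul_im,
      Complex.sub_re, Complex.sub_im]
    nlinarith [sq_nonneg ρ.re, sq_nonneg ρ.im]
  nlinarith [norm_nonneg (1/2 + Complex.I*ρ : ℂ), norm_nonneg (1/2 - Complex.I*ρ : ℂ)]

lemma lag_exp_eq {ρ : ℂ} (n : ℕ) (s : ℝ) :
    laguerre n s * Complex.exp (-(s:ℂ) / 2) * Complex.exp (Complex.I * ρ * s)
      = ∑ k ∈ Finset.range (n + 1),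
          ((n.choose k : ℂ) * (-1) ^ k / (Nat.factorial k : ℂ))
            * ((s:ℂ) ^ k * Complex.exp (-((1 / 2 - Complex.I * ρ) * s))) := by
  have hexp : Complex.exp (-(s:ℂ) / 2) * Complex.exp (Complex.I * ρ * s)
      = Complex.exp (-((1 / 2 - Complex.I * ρ) * s)) := by
    rw [← Complex.exp_add]; congr 1; ring
  rw [laguerre, mul_assoc, hexp, Finset.sum_mul]
  refine Finset.sum_congr rfl fun k _ => ?_
  rw [neg_pow]
  ring

lemma integrableOn_lag {ρ : ℂ} (hρ : 0 < ρ.im) (n : ℕ) :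
    IntegrableOn (fun s : ℝ =>
      laguerre n s * Complex.exp (-(s:ℂ) / 2) * Complex.exp (Complex.I * ρ * s)) (Ioi 0) := by
  have : (fun s : ℝ =>
      laguerre n s * Complex.exp (-(s:ℂ) / 2) * Complex.exp (Complex.I * ρ * s))
      = fun s : ℝ => ∑ k ∈ Finset.range (n + 1),
          ((n.choose k : ℂ) * (-1) ^ k / (Nat.factorial k : ℂ))
            * ((s:ℂ) ^ k * Complex.exp (-((1 / 2 - Complex.I * ρ) * s))) := by
    funext s; exact lag_exp_eq n s
  rw [this]
  exact integrable_finset_sum _ fun k _ => (integrableOn_cpow_exp k (re_c hρ)).const_mul _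

lemma integral_lag {ρ : ℂ} (hρ : 0 < ρ.im) (n : ℕ) :
    ∫ s in Ioi (0:ℝ),
        laguerre n s * Complex.exp (-(s:ℂ) / 2) * Complex.exp (Complex.I * ρ * s)
      = (-1) ^ n * (zmap ρ) ^ n * (zmap ρ + 1) := by
  set c := 1 / 2 - Complex.I * ρ with hc
  have hcre : 0 < c.re := re_c hρ
  have hc0 : c ≠ 0 := c_ne hρ
  calc ∫ s in Ioi (0:ℝ), laguerre n s * Complex.exp (-(s:ℂ)/2) * Complex.exp (Complex.I * ρ * s)
      = ∫ s in Ioi (0:ℝ), ∑ k ∈ Finset.range (n + 1),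
          ((n.choose k : ℂ) * (-1) ^ k / (Nat.factorial k : ℂ))
            * ((s:ℂ) ^ k * Complex.exp (-(c * s))) := by
        refine setIntegral_congr_fun measurableSet_Ioi fun s _ => lag_exp_eq n s
    _ = ∑ k ∈ Finset.range (n + 1), ((n.choose k : ℂ) * (-1) ^ k / (Nat.factorial k : ℂ))
          * ((Nat.factorial k : ℂ) / c ^ (k + 1)) := by
        rw [integral_finset_sum _ fun k _ => (integrableOn_cpow_exp k hcre).const_mul _]
        exact Finset.sum_congr rfl fun k _ => by
          rw [integral_const_mul, integral_cpow_exp hcre k]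
    _ = (1 / c) * ∑ k ∈ Finset.range (n + 1), (-1 / c) ^ k * 1 ^ (n - k) * (n.choose k : ℂ) := by
        rw [Finset.mul_sum]
        refine Finset.sum_congr rfl fun k _ => ?_
        have hfac : (Nat.factorial k : ℂ) ≠ 0 := Nat.cast_ne_zero.mpr (Nat.factorial_ne_zero k)
        rw [pow_succ']
        field_simp
        rw [mul_assoc _ (c ^ k), ← mul_pow, mul_neg, mul_one_div_cancel hc0]
        ring
    _ = (1 / c) * (-1 / c + 1) ^ n := by rw [← add_pow]
    _ = (-1) ^ n * (zmap ρ) ^ n * (zmap ρ + 1) := by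
        have h1 : (-1 / c + 1 : ℂ) = -zmap ρ := by
          rw [← one_sub_inv hρ]; ring
        rw [h1, ← zmap_add_one hρ, neg_pow]
        ring

lemma memLp_cpow_exp (k : ℕ) :
    MemLp (fun s : ℝ => (s:ℂ) ^ k * Complex.exp (-(s:ℂ) / 2)) 2
      (volume.restrict (Ioi (0:ℝ))) := by
  have hm : AEStronglyMeasurable (fun s : ℝ => (s:ℂ) ^ k * Complex.exp (-(s:ℂ) / 2))
      (volume.restrict (Ioi (0:ℝ))) := (Continuous.aestronglyMeasurable (by continuity)).restrict
  rw [memLp_two_iff_integrable_sq_norm hm]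
  have h := integrableOn_pow_exp (2 * k) (b := 1) one_pos
  refine h.congr_fun (fun s hs => ?_) measurableSet_Ioi
  rw [norm_mul, norm_pow, Complex.norm_real, Real.norm_eq_abs,
    _root_.abs_of_nonneg (le_of_lt hs), Complex.norm_exp]
  rw [mul_pow, ← pow_mul, mul_comm k 2]
  congr 1
  rw [← Real.exp_nat_mul]
  congr 1
  push_cast
  simp
  left; ring

lemma memLp_lag (n : ℕ) :
    MemLp (fun s : ℝ => laguerre n s * Complex.exp (-(s:ℂ) / 2)) 2
      (volume.restrict (Ioi (0:ℝ))) := by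
  have : (fun s : ℝ => laguerre n s * Complex.exp (-(s:ℂ) / 2))
      = fun s : ℝ => ∑ k ∈ Finset.range (n + 1),
          ((n.choose k : ℂ) * (-1) ^ k / (Nat.factorial k : ℂ))
            * ((s:ℂ) ^ k * Complex.exp (-(s:ℂ) / 2)) := by
    funext s
    rw [laguerre, Finset.sum_mul]
    refine Finset.sum_congr rfl fun k _ => ?_
    rw [neg_pow]; ring
  exact (memLp_finset_sum _ fun k (_ : k ∈ Finset.range (n+1)) =>
    (memLp_cpow_exp k).const_mul ((n.choose k : ℂ) * (-1) ^ k / (Nat.factorial k : ℂ))).ae_eq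
      (Filter.Eventually.of_forall fun s => (congrFun this.symm s))

lemma memLp_g {ρ : ℂ} (hρ : 0 < ρ.im) :
    MemLp (fun s : ℝ => Complex.exp (Complex.I * ρ * s)) 2
      (volume.restrict (Ioi (0:ℝ))) := by
  have hm : AEStronglyMeasurable (fun s : ℝ => Complex.exp (Complex.I * ρ * s))
      (volume.restrict (Ioi (0:ℝ))) := (Continuous.aestronglyMeasurable (by continuity)).restrict
  rw [memLp_two_iff_integrable_sq_norm hm]
  have h : IntegrableOn (fun s : ℝ => Real.exp (-(2 * ρ.im * s))) (Ioi 0) := by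
    simpa [neg_mul] using exp_neg_integrableOn_Ioi (0:ℝ) (by linarith : 0 < 2 * ρ.im)
  refine h.congr_fun (fun s _ => ?_) measurableSet_Ioi
  rw [Complex.norm_exp, ← Real.exp_nat_mul]
  congr 1
  push_cast
  simp [Complex.mul_re]
  ring

lemma half_add_half : (1 : ℝ≥0∞) / 1 = 1 / 2 + 1 / 2 := by
  rw [ENNReal.div_add_div_same, one_div_one, (by norm_num : (1:ℝ≥0∞) + 1 = 2),
    ENNReal.div_self two_ne_zero ENNReal.ofNat_ne_top]

lemma integrable_mul_L2 {u v : ℝ → ℂ} (hu : MemLp u 2 (volume.restrict (Ioi (0:ℝ))))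
    (hv : MemLp v 2 (volume.restrict (Ioi (0:ℝ)))) :
    Integrable (fun s => u s * v s) (volume.restrict (Ioi (0:ℝ))) := by
  have h := hv.smul hu (r := 1)
  rw [memLp_one_iff_integrable] at h
  exact h.congr (Filter.Eventually.of_forall fun s => by simp [smul_eq_mul, mul_comm])

lemma cs_bound {u v : ℝ → ℂ} (hu : MemLp u 2 (volume.restrict (Ioi (0:ℝ))))
    (hv : MemLp v 2 (volume.restrict (Ioi (0:ℝ)))) :
    ‖∫ s in Ioi (0:ℝ), u s * v s‖
      ≤ (eLpNorm u 2 (volume.restrict (Ioi (0:ℝ))) * eLpNorm v 2 (volume.restrict (Ioi (0:ℝ)))).toReal := by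
  have hint : Integrable (fun s => u s * v s) (volume.restrict (Ioi (0:ℝ))) :=
    integrable_mul_L2 hu hv
  have h1 : ‖∫ s in Ioi (0:ℝ), u s * v s‖ ≤ ∫ s in Ioi (0:ℝ), ‖u s * v s‖ :=
    norm_integral_le_integral_norm _
  have h2 : ∫ s in Ioi (0:ℝ), ‖u s * v s‖
      = (eLpNorm (fun s => u s * v s) 1 (volume.restrict (Ioi (0:ℝ)))).toReal := by
    rw [(memLp_one_iff_integrable.mpr hint).eLpNorm_eq_integral_rpow_norm one_ne_zero
      ENNReal.one_ne_top]
    simp only [ENNReal.toReal_one, inv_one, Real.rpow_one]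
    rw [ENNReal.toReal_ofReal (integral_nonneg fun s => norm_nonneg _)]
  have h3 : eLpNorm (fun s => u s * v s) 1 (volume.restrict (Ioi (0:ℝ)))
      ≤ eLpNorm u 2 (volume.restrict (Ioi (0:ℝ))) * eLpNorm v 2 (volume.restrict (Ioi (0:ℝ))) := by
    have := eLpNorm_smul_le_mul_eLpNorm (p := 2) (q := 2) (r := 1)
      hv.aestronglyMeasurable hu.aestronglyMeasurable
    exact this.trans_eq rfl
  calc ‖∫ s in Ioi (0:ℝ), u s * v s‖ ≤ ∫ s in Ioi (0:ℝ), ‖u s * v s‖ := h1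
    _ = (eLpNorm (fun s => u s * v s) 1 (volume.restrict (Ioi (0:ℝ)))).toReal := h2
    _ ≤ _ := ENNReal.toReal_mono (ENNReal.mul_ne_top hu.eLpNorm_ne_top hv.eLpNorm_ne_top) h3

lemma key_tendsto (f : ℝ → ℂ) (a : ℕ → ℂ)
    (hf : MemLp f 2 (volume.restrict (Set.Ioi (0 : ℝ))))
    (hconv : Filter.Tendsto
      (fun N : ℕ => eLpNorm
        (fun s : ℝ => f s -
          ∑ n ∈ Finset.range (N + 1), a n * laguerre n (s : ℂ) * Complex.exp (-(s : ℂ) / 2))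
        2 (volume.restrict (Set.Ioi (0 : ℝ))))
      Filter.atTop (nhds 0)) {ρ : ℂ} (hρ : 0 < ρ.im) :
    Tendsto (fun N : ℕ => (∑ n ∈ Finset.range (N + 1), (-1 : ℂ) ^ n * (zmap ρ) ^ n * a n)
        * (zmap ρ + 1)) atTop
      (nhds (∫ s in Ioi (0:ℝ), f s * Complex.exp (Complex.I * ρ * s))) := by
  set μ := volume.restrict (Ioi (0:ℝ))
  set g := fun s : ℝ => Complex.exp (Complex.I * ρ * s) with hg_def
  have hg : MemLp g 2 μ := memLp_g hρ
  set S := fun (N : ℕ) (s : ℝ) =>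
    ∑ n ∈ Finset.range (N + 1), a n * laguerre n (s : ℂ) * Complex.exp (-(s : ℂ) / 2) with hS_def
  have hSmem : ∀ N, MemLp (S N) 2 μ := by
    intro N
    apply memLp_finset_sum _ fun n _ => ?_
    have h := (memLp_lag n).const_mul (a n)
    exact h.ae_eq (Filter.Eventually.of_forall fun s => by simp [mul_assoc])
  have hSg_eq : ∀ N, (fun s => S N s * g s) = fun s : ℝ => ∑ n ∈ Finset.range (N + 1),
      a n * (laguerre n s * Complex.exp (-(s:ℂ) / 2) * Complex.exp (Complex.I * ρ * s)) := by
    intro N; funext s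
    rw [hS_def, Finset.sum_mul]
    exact Finset.sum_congr rfl fun n _ => by ring
  have hSg_int : ∀ N, Integrable (fun s => S N s * g s) μ := by
    intro N
    rw [hSg_eq N]
    exact integrable_finset_sum _ fun n _ => (integrableOn_lag hρ n).const_mul _
  have hfg_int : Integrable (fun s => f s * g s) μ := integrable_mul_L2 hf hg
  have hSg_val : ∀ N, ∫ s in Ioi (0:ℝ), S N s * g s
      = (∑ n ∈ Finset.range (N + 1), (-1 : ℂ) ^ n * (zmap ρ) ^ n * a n) * (zmap ρ + 1) := by
    intro N
    rw [hSg_eq N, integral_finset_sum _ fun n _ => (integrableOn_lag hρ n).const_mul _,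
      Finset.sum_mul]
    refine Finset.sum_congr rfl fun n _ => ?_
    rw [integral_const_mul, integral_lag hρ n]
    ring
  rw [tendsto_iff_norm_sub_tendsto_zero]
  have hbound : ∀ N, ‖(∑ n ∈ Finset.range (N + 1), (-1 : ℂ) ^ n * (zmap ρ) ^ n * a n)
        * (zmap ρ + 1) - ∫ s in Ioi (0:ℝ), f s * g s‖
      ≤ (eLpNorm (fun s => f s - S N s) 2 μ * eLpNorm g 2 μ).toReal := by
    intro N
    rw [← hSg_val N, ← integral_sub (hSg_int N) hfg_int]
    have : (fun s => S N s * g s - f s * g s) = fun s => (S N s - f s) * g s := by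
      funext s; ring
    rw [this]
    have hb := cs_bound ((hSmem N).sub hf) hg
    calc ‖∫ s in Ioi (0:ℝ), (S N s - f s) * g s‖
        ≤ (eLpNorm (fun s => S N s - f s) 2 μ * eLpNorm g 2 μ).toReal := hb
      _ = (eLpNorm (fun s => f s - S N s) 2 μ * eLpNorm g 2 μ).toReal := by
          congr 2
          rw [show (fun s => f s - S N s) = -(fun s => S N s - f s) from
            funext fun s => (neg_sub _ _).symm, eLpNorm_neg]
  have hlim : Tendsto (fun N => (eLpNorm (fun s => f s - S N s) 2 μ * eLpNorm g 2 μ).toReal)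
      atTop (nhds 0) := by
    have h1 : Tendsto (fun N => eLpNorm (fun s => f s - S N s) 2 μ * eLpNorm g 2 μ)
        atTop (nhds 0) := by
      have := ENNReal.Tendsto.mul_const hconv (Or.inr hg.eLpNorm_ne_top)
      rw [zero_mul] at this
      exact this
    have := (ENNReal.tendsto_toReal (a := 0) (by simp)).comp h1
    simpa only [Function.comp_def, ENNReal.toReal_zero] using this
  exact squeeze_zero (fun N => norm_nonneg _) hbound hlim

end Aux

/-- If `f ∈ L²(0,∞)` is the `L²`-limit of its Fourier–Laguerre partial sums
`Σ_{n=0}^{N} aₙ Lₙ(s) e^{−s/2}`, then for every `ρ` with `Im ρ > 0`, writing `z = z(ρ)`,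
the series `Σ (−1)ⁿ zⁿ aₙ` converges absolutely and
`∫₀^∞ f(s) e^{iρs} ds = (z+1) Σ_{n=0}^{∞} (−1)ⁿ zⁿ aₙ`. -/
theorem levin_to_spps (f : ℝ → ℂ) (a : ℕ → ℂ)
    (hf : MemLp f 2 (volume.restrict (Set.Ioi (0 : ℝ))))
    (hconv : Filter.Tendsto
      (fun N : ℕ => eLpNorm
        (fun s : ℝ => f s -
          ∑ n ∈ Finset.range (N + 1), a n * laguerre n (s : ℂ) * Complex.exp (-(s : ℂ) / 2))
        2 (volume.restrict (Set.Ioi (0 : ℝ))))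
      Filter.atTop (nhds 0)) :
    ∀ ρ : ℂ, 0 < ρ.im →
      Summable (fun n : ℕ => ‖(-1 : ℂ) ^ n * (zmap ρ) ^ n * a n‖) ∧
      ∫ s in Set.Ioi (0 : ℝ), f s * Complex.exp (Complex.I * ρ * (s : ℂ))
        = (zmap ρ + 1) * ∑' n : ℕ, (-1 : ℂ) ^ n * (zmap ρ) ^ n * a n := by
  intro ρ hρ
  set z := zmap ρ with hz_def
  have hz1 : ‖z‖ < 1 := abs_zmap_lt_one hρ
  -- choose r with |z| < r < 1
  set r : ℝ := (‖z‖ + 1) / 2 with hr_def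
  have hr0 : 0 < r := by positivity
  have hzr : ‖z‖ < r := by rw [hr_def]; linarith
  have hr1 : r < 1 := by rw [hr_def]; linarith
  -- the auxiliary spectral point ρ' with zmap ρ' = r
  set t : ℝ := (1 - r) / (2 * (1 + r)) with ht_def
  have ht0 : 0 < t := by
    apply div_pos (by linarith) (by linarith)
  set ρ' : ℂ := Complex.I * (t : ℂ) with hρ'_def
  have hρ'im : 0 < ρ'.im := by
    rw [hρ'_def]
    simpa using ht0
  have hzρ' : zmap ρ' = (r : ℂ) := by
    rw [zmap, hρ'_def, ← mul_assoc, Complex.I_mul_I]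
    have h1 : ((1:ℂ)/2 + -1 * t) = (((1:ℝ)/2 - t : ℝ) : ℂ) := by push_cast; ring
    have h2 : ((1:ℂ)/2 - -1 * t) = (((1:ℝ)/2 + t : ℝ) : ℂ) := by push_cast; ring
    rw [h1, h2, ← Complex.ofReal_div, Complex.ofReal_inj]
    rw [ht_def]
    have hd : (1:ℝ) + r ≠ 0 := by linarith
    field_simp
    ring
  -- terms at ρ' tend to zero, hence are bounded
  have hkey' := key_tendsto f a hf hconv hρ'im
  have hr1c : (zmap ρ' + 1) ≠ 0 := zmap_add_one_ne hρ'im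
  set L := ∫ s in Ioi (0:ℝ), f s * Complex.exp (Complex.I * ρ' * s) with hL
  have hT : Tendsto (fun N => ∑ n ∈ Finset.range (N + 1), (-1:ℂ)^n * (zmap ρ')^n * a n)
      atTop (nhds (L * (zmap ρ' + 1)⁻¹)) := by
    have := hkey'.mul_const (zmap ρ' + 1)⁻¹
    refine this.congr fun N => ?_
    rw [mul_assoc, mul_inv_cancel₀ hr1c, mul_one]
  have hb0 : Tendsto (fun n : ℕ => (-1:ℂ)^n * (zmap ρ')^n * a n) atTop (nhds 0) := by
    have hsub := (hT.comp (tendsto_add_atTop_nat 1)).sub hT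
    rw [sub_self] at hsub
    rw [← tendsto_add_atTop_iff_nat 1]
    refine hsub.congr fun N => ?_
    simp only [Function.comp_apply]
    rw [Finset.sum_range_succ (n := N + 1)]
    ring
  have hbdd : ∃ M : ℝ, ∀ n : ℕ, r ^ n * ‖a n‖ ≤ M := by
    have hnorm : Tendsto (fun n : ℕ => r ^ n * ‖a n‖) atTop (nhds 0) := by
      have := hb0.norm
      rw [norm_zero] at this
      refine this.congr fun n => ?_
      rw [norm_mul, norm_mul, norm_pow, norm_pow, hzρ']
      simp [abs_of_pos hr0]
    obtain ⟨M, hM⟩ := hnorm.bddAbove_range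
    exact ⟨M, fun n => hM ⟨n, rfl⟩⟩
  obtain ⟨M, hM⟩ := hbdd
  -- summability
  have hsum : Summable (fun n : ℕ => ‖(-1 : ℂ) ^ n * z ^ n * a n‖) := by
    have hgeo : Summable (fun n : ℕ => (‖z‖ / r) ^ n * M) :=
      (summable_geometric_of_lt_one (div_nonneg (norm_nonneg z) hr0.le)
        ((div_lt_one hr0).mpr hzr)).mul_right M
    refine Summable.of_nonneg_of_le (fun n => norm_nonneg _) (fun n => ?_) hgeo
    have h1 : ‖(-1 : ℂ) ^ n * z ^ n * a n‖ = ‖z‖ ^ n * ‖a n‖ := by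
      rw [norm_mul, norm_mul, norm_pow, norm_pow]
      simp
    rw [h1]
    have h2 : ‖z‖ ^ n * ‖a n‖ = (‖z‖ / r) ^ n * (r ^ n * ‖a n‖) := by
      have hrn : (r:ℝ) ^ n ≠ 0 := by positivity
      rw [div_pow]
      field_simp
    rw [h2]
    exact mul_le_mul_of_nonneg_left (hM n) (by positivity)
  refine ⟨hsum, ?_⟩
  -- the identity
  have hsum' : Summable (fun n : ℕ => (-1 : ℂ) ^ n * z ^ n * a n) := hsum.of_norm
  have hps : Tendsto (fun N => ∑ n ∈ Finset.range (N + 1), (-1:ℂ)^n * z^n * a n)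
      atTop (nhds (∑' n : ℕ, (-1:ℂ)^n * z^n * a n)) :=
    hsum'.hasSum.tendsto_sum_nat.comp (tendsto_add_atTop_nat 1)
  have hps' := hps.mul_const (z + 1)
  have hkey := key_tendsto f a hf hconv hρ
  have := tendsto_nhds_unique hkey hps'
  rw [this, mul_comm]
end
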